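/- For any simple graph G with at least one edge, the vertex set of G (viewed as a subset of the vertices of G^{1/2}) is a secure dominating set of the 2-subdivision G^{1/2}; consequently γ_s(G^{1/2}) ≤ |V(G)| whenever G has no isolated vertices. -/

import Mathlib

/-! Every subdivision vertex `x^{ab}` (with `a < b`) is adjacent to `a`, which dominates it.
Swapping `a` for `x^{ab}` still dominates: `a` is now dominated by `x^{ab}`, and every other
subdivision vertex `x^{f}` keeps the endpoint of `f` different from `a`. -/

open SimpleGraph

/-- `D` is a dominating set of the simple graph `H`. -/
def Dominates {W : Type*} (H : SimpleGraph W) (D : Set W) : Prop :=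
  ∀ v ∉ D, ∃ u ∈ D, H.Adj u v

/-- `D` is a secure dominating set of `H`: it is dominating, and every vertex outside `D`
has a neighbour `v ∈ D` whose swap keeps the set dominating. -/
def SecureDominates {W : Type*} (H : SimpleGraph W) (D : Set W) : Prop :=
  Dominates H D ∧ ∀ u ∉ D, ∃ v ∈ D, H.Adj u v ∧ Dominates H ((D \ {v}) ∪ {u})

/-- The domination number `γ(H)`. -/
noncomputable def domNum {W : Type*} (H : SimpleGraph W) : ℕ :=
  sInf {n | ∃ D : Set W, Dominates H D ∧ D.ncard = n}

/-- The secure domination number `γₛ(H)`. -/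
noncomputable def secDomNum {W : Type*} (H : SimpleGraph W) : ℕ :=
  sInf {n | ∃ D : Set W, SecureDominates H D ∧ D.ncard = n}

/-- The edges of `G`, oriented from smaller to larger endpoint. -/
abbrev OEdge {V : Type*} (G : SimpleGraph V) [LinearOrder V] : Type _ :=
  {p : V × V // G.Adj p.1 p.2 ∧ p.1 < p.2}

/-- The `k`-subdivision `G^{1/k}` (for `k ≥ 2`): each edge `uv` (with `u < v`) is replaced by the
path `u, x₁, …, x_{k-1}, v` of length `k`, the `x_i` being new internal vertices. -/
def Subdiv {V : Type*} (G : SimpleGraph V) [LinearOrder V] (k : ℕ) :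
    SimpleGraph (V ⊕ (OEdge G × Fin (k - 1))) :=
  SimpleGraph.fromRel (fun a b =>
    match a, b with
    | Sum.inl u, Sum.inr ⟨e, i⟩ => (i.val = 0 ∧ u = e.val.1) ∨ (i.val = k - 2 ∧ u = e.val.2)
    | Sum.inr ⟨e, i⟩, Sum.inr ⟨f, j⟩ => e = f ∧ i.val + 1 = j.val
    | _, _ => False)

/-- The star graph `K_{1,n-1}` on `Fin n`, with centre `0`. -/
def starGraph (n : ℕ) : SimpleGraph (Fin n) :=
  SimpleGraph.fromRel (fun a _ => a.val = 0)

/-- `G` is a star graph: some centre is adjacent to exactly the other vertices, and there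
are no other edges. -/
def IsStar {V : Type*} (G : SimpleGraph V) : Prop :=
  ∃ c : V, ∀ u v : V, G.Adj u v ↔ (u ≠ v ∧ (u = c ∨ v = c))

theorem secDomNum_le_ncard {W : Type*} {H : SimpleGraph W} {D : Set W}
    (hD : SecureDominates H D) : secDomNum H ≤ D.ncard :=
  Nat.sInf_le ⟨D, hD, rfl⟩

section Subdiv

variable {V : Type*} [LinearOrder V] {G : SimpleGraph V}

theorem OEdge.exists_endpoint_ne (f : OEdge G) (a : V) :
    ∃ w, (w = f.val.1 ∨ w = f.val.2) ∧ w ≠ a := by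
  by_cases hf : f.val.1 = a
  · exact ⟨f.val.2, Or.inr rfl, fun h => f.prop.2.ne (hf.trans h.symm)⟩
  · exact ⟨f.val.1, Or.inl rfl, hf⟩

theorem subdiv_two_adj_inl_inr {u : V} {e : OEdge G} {i : Fin (2 - 1)}
    (hu : u = e.val.1 ∨ u = e.val.2) : (Subdiv G 2).Adj (Sum.inl u) (Sum.inr (e, i)) := by
  have hi : i.val = 0 := Nat.lt_one_iff.mp i.isLt
  refine (fromRel_adj ..).mpr ⟨Sum.inl_ne_inr, Or.inl ?_⟩
  rcases hu with hu | hu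
  · exact Or.inl ⟨hi, hu⟩
  · exact Or.inr ⟨hi, hu⟩

theorem dominates_subdiv_two_range_inl :
    Dominates (Subdiv G 2) (Set.range Sum.inl) := by
  rintro (w | ⟨e, i⟩) hw
  · exact absurd ⟨w, rfl⟩ hw
  · exact ⟨Sum.inl e.val.1, ⟨_, rfl⟩, subdiv_two_adj_inl_inr (Or.inl rfl)⟩

theorem dominates_subdiv_two_swap (e : OEdge G) (i : Fin (2 - 1)) :
    Dominates (Subdiv G 2)
      ((Set.range Sum.inl \ {Sum.inl e.val.1}) ∪ {Sum.inr (e, i)}) := by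
  rintro (x | ⟨f, j⟩) hx
  · obtain rfl : x = e.val.1 := by
      by_contra hne
      exact hx (Or.inl ⟨⟨x, rfl⟩, by simpa using hne⟩)
    exact ⟨Sum.inr (e, i), Or.inr rfl, (subdiv_two_adj_inl_inr (Or.inl rfl)).symm⟩
  · obtain ⟨w, hw, hwe⟩ := f.exists_endpoint_ne e.val.1
    exact ⟨Sum.inl w, Or.inl ⟨⟨w, rfl⟩, by simpa using hwe⟩, subdiv_two_adj_inl_inr hw⟩

theorem secureDominates_subdiv_two_range_inl :
    SecureDominates (Subdiv G 2) (Set.range Sum.inl) := by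
  refine ⟨dominates_subdiv_two_range_inl, ?_⟩
  rintro (w | ⟨e, i⟩) hw
  · exact absurd ⟨w, rfl⟩ hw
  · exact ⟨Sum.inl e.val.1, ⟨_, rfl⟩, (subdiv_two_adj_inl_inr (Or.inl rfl)).symm,
      dominates_subdiv_two_swap e i⟩

end Subdiv

theorem stmt_16_general {V : Type*} [LinearOrder V] (G : SimpleGraph V) :
    SecureDominates (Subdiv G 2) (Set.range Sum.inl) ∧
    secDomNum (Subdiv G 2) ≤ Nat.card V := by
  refine ⟨secureDominates_subdiv_two_range_inl, ?_⟩
  calc secDomNum (Subdiv G 2) ≤ (Set.range Sum.inl).ncard :=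
        secDomNum_le_ncard secureDominates_subdiv_two_range_inl
    _ = Nat.card V := Set.ncard_range_of_injective Sum.inl_injective

/-- For any simple graph `G` with no isolated vertices, `V(G)` (viewed inside
`G^{1/2}`) is a secure dominating set of `G^{1/2}`; consequently `γₛ(G^{1/2}) ≤ |V(G)|`. -/
theorem stmt_16 {V : Type*} [Fintype V] [LinearOrder V] (G : SimpleGraph V)
    (h : ∀ v : V, ∃ u, G.Adj v u) :
    SecureDominates (Subdiv G 2) (Set.range Sum.inl) ∧
    secDomNum (Subdiv G 2) ≤ Nat.card V :=
  stmt_16_general G
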